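/- An equicontinuous cellular automaton on A^ℤ (or A^ℤ²) is ultimately periodic: there exist n ≥ 0 and p ≥ 1 such that F^{n+p} = F^n. If moreover F is bijective, then F is periodic: F^p = identity for some p ≥ 1. -/
import Mathlib


open Classical in
/-- The Cantor-like distance on `(ℤ × ℤ) → A`. -/
noncomputable def dC {A : Type*} (x y : (ℤ × ℤ) → A) : ℝ :=
  if x = y then 0
  else (2 : ℝ) ^
    (-((sInf {n : ℕ | ∃ i : ℤ × ℤ, x i ≠ y i ∧ max i.1.natAbs i.2.natAbs = n} : ℕ) : ℤ))

/-- `F` is a 2D cellular automaton given by local rule `f` on neighborhood `U`. -/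
def IsCA2 {A : Type*} (U : Finset (ℤ × ℤ)) (f : ({u // u ∈ U} → A) → A)
    (F : ((ℤ × ℤ) → A) → ((ℤ × ℤ) → A)) : Prop :=
  ∀ (x : (ℤ × ℤ) → A) (z : ℤ × ℤ), F x z = f (fun u => x (z + u.1))

/-- `x` is an equicontinuous point of `F` on `(ℤ × ℤ) → A`. -/
def IsEquicontinuousPt2 {A : Type*} (F : ((ℤ × ℤ) → A) → ((ℤ × ℤ) → A))
    (x : (ℤ × ℤ) → A) : Prop :=
  ∀ ε > (0:ℝ), ∃ δ > (0:ℝ), ∀ y : (ℤ × ℤ) → A, dC x y < δ →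
    ∀ n : ℕ, dC (F^[n] x) (F^[n] y) < ε

/-- `F` is sensitive to initial conditions on `(ℤ × ℤ) → A`. -/
def IsSensitive2 {A : Type*} (F : ((ℤ × ℤ) → A) → ((ℤ × ℤ) → A)) : Prop :=
  ∃ ε > (0:ℝ), ∀ (x : (ℤ × ℤ) → A), ∀ δ > (0:ℝ), ∃ (y : (ℤ × ℤ) → A) (n : ℕ),
    dC x y < δ ∧ dC (F^[n] x) (F^[n] y) > ε

/-- If two configurations agree on the ball of radius `k`, their distance is less
than `2 ^ (-k)`. -/
lemma dC_lt_of_agree {A : Type*} {x y : (ℤ × ℤ) → A} {k : ℕ}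
    (h : ∀ i : ℤ × ℤ, max i.1.natAbs i.2.natAbs ≤ k → x i = y i) :
    dC x y < (2:ℝ) ^ (-(k:ℤ)) := by
  unfold dC
  split_ifs with h0
  · positivity
  · set S := {n : ℕ | ∃ i : ℤ × ℤ, x i ≠ y i ∧ max i.1.natAbs i.2.natAbs = n} with hS
    have hne : S.Nonempty := by
      obtain ⟨i, hi⟩ := Function.ne_iff.mp h0
      exact ⟨_, i, hi, rfl⟩
    obtain ⟨i, hi, him⟩ := Nat.sInf_mem hne
    have hk : k < sInf S := by
      by_contra hc
      exact hi (h i (by omega))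
    apply zpow_lt_zpow_right₀ (by norm_num : (1:ℝ) < 2)
    omega

/-- If `dC x y < 1` then `x` and `y` agree at the origin. -/
lemma agree_zero_of_dC_lt_one {A : Type*} {x y : (ℤ × ℤ) → A}
    (h : dC x y < 1) : x 0 = y 0 := by
  by_contra hne
  have h0 : x ≠ y := fun he => hne (congrFun he 0)
  rw [dC, if_neg h0] at h
  have hmem : (0:ℕ) ∈ {n : ℕ | ∃ i : ℤ × ℤ, x i ≠ y i ∧ max i.1.natAbs i.2.natAbs = n} :=
    ⟨0, hne, rfl⟩
  have : sInf {n : ℕ | ∃ i : ℤ × ℤ, x i ≠ y i ∧ max i.1.natAbs i.2.natAbs = n} = 0 :=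
    Nat.eq_zero_of_le_zero (Nat.sInf_le hmem)
  rw [this] at h
  norm_num at h

/-- A cellular automaton (and its iterates) commutes with translations. -/
lemma shift_iterate {A : Type*} {U : Finset (ℤ × ℤ)} {f : ({u // u ∈ U} → A) → A}
    {F : ((ℤ × ℤ) → A) → ((ℤ × ℤ) → A)} (hF : IsCA2 U f F) (n : ℕ) (z : ℤ × ℤ)
    (x : (ℤ × ℤ) → A) :
    F^[n] (fun w => x (w + z)) = fun w => F^[n] x (w + z) := by
  induction n generalizing x with
  | zero => rfl
  | succ n ih =>
    rw [Function.iterate_succ_apply, Function.iterate_succ_apply]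
    have hstep : F (fun w => x (w + z)) = fun w => F x (w + z) := by
      funext w
      rw [hF, hF]
      congr 1
      funext u
      congr 1
      rw [add_assoc, add_assoc, add_comm z u.1]
    rw [hstep, ih]

/-- An equicontinuous (uniformly, over all iterates) cellular automaton is
ultimately periodic, and periodic if moreover bijective. -/
theorem equicontinuous_CA_ultimately_periodic
    (A : Type*) [Fintype A]
    (U : Finset (ℤ × ℤ)) (f : ({u // u ∈ U} → A) → A)
    (F : ((ℤ × ℤ) → A) → ((ℤ × ℤ) → A)) (hF : IsCA2 U f F)
    (heq : ∀ ε > (0:ℝ), ∃ δ > (0:ℝ), ∀ x y : (ℤ × ℤ) → A, dC x y < δ →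
      ∀ n : ℕ, dC (F^[n] x) (F^[n] y) < ε) :
    (∃ (n : ℕ) (p : ℕ), 1 ≤ p ∧ F^[n + p] = F^[n]) ∧
    (Function.Bijective F → ∃ p : ℕ, 1 ≤ p ∧ F^[p] = id) := by
  have h1 : ∃ (n : ℕ) (p : ℕ), 1 ≤ p ∧ F^[n + p] = F^[n] := by
    cases isEmpty_or_nonempty A with
    | inl hA =>
      exact ⟨0, 1, le_refl _, funext fun x => (hA.false (x 0)).elim⟩
    | inr hA =>
      obtain ⟨δ, hδ, hkey⟩ := heq 1 one_pos
      obtain ⟨k, hk⟩ : ∃ k : ℕ, (2:ℝ) ^ (-(k:ℤ)) < δ := by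
        obtain ⟨k, hk⟩ := exists_pow_lt_of_lt_one hδ (by norm_num : (1:ℝ)/2 < 1)
        refine ⟨k, ?_⟩
        have : (2:ℝ) ^ (-(k:ℤ)) = (1/2:ℝ) ^ k := by
          rw [zpow_neg, zpow_natCast, one_div, inv_pow]
        rw [this]; exact hk
      -- locality: the value of any iterate at `z` depends only on the ball of
      -- radius `k` around `z`.
      have loc : ∀ (n : ℕ) (x y : (ℤ × ℤ) → A) (z : ℤ × ℤ),
          (∀ i : ℤ × ℤ, max i.1.natAbs i.2.natAbs ≤ k → x (i + z) = y (i + z)) →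
          F^[n] x z = F^[n] y z := by
        intro n x y z hagree
        have h1 : dC (fun w => x (w + z)) (fun w => y (w + z)) < δ :=
          lt_trans (dC_lt_of_agree hagree) hk
        have h2 := hkey _ _ h1 n
        rw [shift_iterate hF, shift_iterate hF] at h2
        have h3 := agree_zero_of_dC_lt_one h2
        simpa using h3
      -- the finite ball of radius `k`
      set Bs : Finset (ℤ × ℤ) := Finset.Icc (-(k:ℤ), -(k:ℤ)) ((k:ℤ), (k:ℤ)) with hBs
      have hmem : ∀ i : ℤ × ℤ, i ∈ Bs ↔ max i.1.natAbs i.2.natAbs ≤ k := by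
        intro i
        simp only [hBs, Finset.mem_Icc, Prod.le_def]
        omega
      let a₀ : A := Classical.arbitrary A
      let ext : ({i // i ∈ Bs} → A) → ((ℤ × ℤ) → A) :=
        fun w i => if h : i ∈ Bs then w ⟨i, h⟩ else a₀
      let Φ : ℕ → (({i // i ∈ Bs} → A) → A) := fun n w => F^[n] (ext w) 0
      have rep : ∀ (n : ℕ) (x : (ℤ × ℤ) → A) (z : ℤ × ℤ),
          F^[n] x z = Φ n (fun i => x (i.1 + z)) := by
        intro n x z
        set w : {i // i ∈ Bs} → A := fun i => x (i.1 + z) with hw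
        have step1 : F^[n] x z = F^[n] (fun j => ext w (j - z)) z := by
          apply loc
          intro i hi
          simp only [ext, add_sub_cancel_right]
          rw [dif_pos ((hmem i).mpr hi)]
        have step2 : F^[n] (fun j => ext w (j - z)) z = F^[n] (ext w) 0 := by
          have := congrFun (shift_iterate hF n (-z) (ext w)) z
          simp only [sub_eq_add_neg] at *
          rw [this, add_neg_cancel]
        rw [step1, step2]
      obtain ⟨a, b, hne, hab⟩ := Finite.exists_ne_map_eq_of_infinite Φ
      rcases hne.lt_or_gt with hlt | hlt
      · refine ⟨a, b - a, by omega, ?_⟩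
        have hba : a + (b - a) = b := by omega
        rw [hba]
        funext x
        funext z
        rw [rep b, rep a, hab]
      · refine ⟨b, a - b, by omega, ?_⟩
        have hba : b + (a - b) = a := by omega
        rw [hba]
        funext x
        funext z
        rw [rep a, rep b, hab]
  refine ⟨h1, fun hbij => ?_⟩
  obtain ⟨n, p, hp, hnp⟩ := h1
  refine ⟨p, hp, funext fun x => ?_⟩
  have hinj : Function.Injective (F^[n]) := (hbij.iterate n).injective
  apply hinj
  rw [← Function.iterate_add_apply]
  rw [hnp]
  rfl
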